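/- The operators WP − PW^t and W*P − P W̄ are zeroth-order (multiplication by matrix-valued functions, containing no differentiation of the argument). Consequently, setting Q := WP − PW^t − WW^t and Q̂ := W*P − P W̄ − W* W̄, one has the factorizations (P + W)(P − W^t) = −ΔI₈ + Q and (P + W*)(P − W̄) = −ΔI₈ + Q̂, which are Schrödinger-type operators with no first-order terms. Likewise, −P W^t(−κ̄,ᾱ,β) + W(−κ̄,ᾱ,β)P is zeroth-order and (P + W(−κ̄,ᾱ,β))(P − W^t(−κ̄,ᾱ,β)) = −ΔI₈ + Q̃ with Q̃ := −P W^t(−κ̄,ᾱ,β) + W(−κ̄,ᾱ,β)P − W(−κ̄,ᾱ,β)W^t(−κ̄,ᾱ,β) zeroth-order. -/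

import Mathlib

/- Common setup: 3D vector calculus, the Maxwell/Dirac 8×8 operators of
Caro–Marletta–Reyes "Uniqueness for an IBVP for Maxwell equations with local data". -/

noncomputable section

open MeasureTheory Set

abbrev R3 : Type := EuclideanSpace ℝ (Fin 3)
abbrev C3 : Type := Fin 3 → ℂ
abbrev C8 : Type := Fin 8 → ℂ

/-- Partial derivative in the `j`-th coordinate direction. -/
def pd (j : Fin 3) (f : R3 → ℂ) (x : R3) : ℂ :=
  fderiv ℝ f x (EuclideanSpace.single j (1:ℝ))

def divg (u : R3 → C3) (x : R3) : ℂ := ∑ j : Fin 3, pd j (fun y => u y j) x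

def curl (u : R3 → C3) (x : R3) : C3 := fun i =>
  pd (i + 1) (fun y => u y (i + 2)) x - pd (i + 2) (fun y => u y (i + 1)) x

def lapC (f : R3 → ℂ) (x : R3) : ℂ := ∑ j : Fin 3, pd j (fun y => pd j f y) x

def lap8 (U : R3 → C8) (x : R3) : C8 := fun k => lapC (fun y => U y k) x

/-- Complex-bilinear dot product. -/
def dot3 (a b : C3) : ℂ := ∑ i : Fin 3, a i * b i

/-- Complex-bilinear cross product. -/
def crossC (a b : C3) : C3 := fun i => a (i+1) * b (i+2) - a (i+2) * b (i+1)

def toC3 (n : R3) : C3 := fun i => (n i : ℂ)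

def crossR (n : R3) (b : C3) : C3 := crossC (toC3 n) b

/-- Hermitian pairing `(a|b) = ∑ conj (b k) * a k`. -/
def ip8 (a b : C8) : ℂ := ∑ k : Fin 8, (starRingEnd ℂ) (b k) * a k

def norm3 (a : C3) : ℝ := Real.sqrt (∑ i : Fin 3, ‖a i‖^2)
def norm8 (a : C8) : ℝ := Real.sqrt (∑ k : Fin 8, ‖a k‖^2)

def matNorm (A : Matrix (Fin 8) (Fin 8) ℂ) : ℝ :=
  Real.sqrt (∑ i : Fin 8, ∑ j : Fin 8, ‖A i j‖^2)

/-- `D = (1/i)∇`. -/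
def Dof (f : R3 → ℂ) (x : R3) : C3 := fun j => -Complex.I * pd j f x

/-- Assemble a `ℂ⁸` vector from the partition (scalar, 3-vector | scalar, 3-vector). -/
def asm (a : ℂ) (u : C3) (b : ℂ) (w : C3) : C8 := ![a, u 0, u 1, u 2, b, w 0, w 1, w 2]

def pt1 (v : C8) : ℂ := v 0
def vec1 (v : C8) : C3 := fun j => v (Fin.mk (j.val + 1) (by have := j.isLt; omega))
def pt2 (v : C8) : ℂ := v 4
def vec2 (v : C8) : C3 := fun j => v (Fin.mk (j.val + 5) (by have := j.isLt; omega))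

/-- The 8×8 first order operator `P = [[0,0,0,D·],[0,0,D,−D×],[0,D·,0,0],[D,D×,0,0]]`. -/
def Pop (U : R3 → C8) (x : R3) : C8 :=
  asm (-Complex.I * divg (fun y => vec2 (U y)) x)
      (fun i => -Complex.I * pd i (fun y => pt2 (U y)) x
                + Complex.I * curl (fun y => vec2 (U y)) x i)
      (-Complex.I * divg (fun y => vec1 (U y)) x)
      (fun i => -Complex.I * pd i (fun y => pt1 (U y)) x
                - Complex.I * curl (fun y => vec1 (U y)) x i)

/-- The zeroth-order matrix
`W(κ,α,β) = κI₈ + ½[[0,0,0,Dα·],[0,0,Dα,Dα×],[0,Dβ·,0,0],[Dβ,−Dβ×,0,0]]`. -/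
def Wmat (κ α β : R3 → ℂ) (x : R3) : Matrix (Fin 8) (Fin 8) ℂ :=
  let a := Dof α x
  let b := Dof β x
  let k := κ x
  Matrix.of
  ![![k, 0, 0, 0, 0, a 0 / 2, a 1 / 2, a 2 / 2],
    ![0, k, 0, 0, a 0 / 2, 0, -(a 2) / 2, a 1 / 2],
    ![0, 0, k, 0, a 1 / 2, a 2 / 2, 0, -(a 0) / 2],
    ![0, 0, 0, k, a 2 / 2, -(a 1) / 2, a 0 / 2, 0],
    ![0, b 0 / 2, b 1 / 2, b 2 / 2, k, 0, 0, 0],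
    ![b 0 / 2, 0, b 2 / 2, -(b 1) / 2, 0, k, 0, 0],
    ![b 1 / 2, -(b 2) / 2, 0, b 0 / 2, 0, 0, k, 0],
    ![b 2 / 2, b 1 / 2, -(b 0) / 2, 0, 0, 0, 0, k]]

def alphaOf (γ : R3 → ℂ) : R3 → ℂ := fun x => Complex.log (γ x)
def betaOf (μ : R3 → ℝ) : R3 → ℂ := fun x => (Real.log (μ x) : ℂ)
def kappaOf (ω : ℝ) (μ : R3 → ℝ) (γ : R3 → ℂ) : R3 → ℂ :=
  fun x => (ω : ℂ) * (Real.sqrt (μ x) : ℂ) * (γ x) ^ ((1 : ℂ)/2)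

/-- `W` built from the coefficients `μ`, `γ` at frequency `ω`. -/
def WmatC (ω : ℝ) (μ : R3 → ℝ) (γ : R3 → ℂ) : R3 → Matrix (Fin 8) (Fin 8) ℂ :=
  fun x => Wmat (kappaOf ω μ γ) (alphaOf γ) (betaOf μ) x

/-- `W(−κ̄, ᾱ, β)`. -/
def WmatTil (ω : ℝ) (μ : R3 → ℝ) (γ : R3 → ℂ) : R3 → Matrix (Fin 8) (Fin 8) ℂ :=
  fun x => Wmat (fun y => -(starRingEnd ℂ) (kappaOf ω μ γ y))
                (fun y => (starRingEnd ℂ) (alphaOf γ y)) (betaOf μ) x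

/-- The augmented-system potential `V`. -/
def Vmat (ω : ℝ) (μ : R3 → ℝ) (γ : R3 → ℂ) (x : R3) : Matrix (Fin 8) (Fin 8) ℂ :=
  let a := Dof (alphaOf γ) x
  let b := Dof (betaOf μ) x
  let w : ℂ := (ω : ℂ) * (μ x : ℂ)
  let g : ℂ := (ω : ℂ) * γ x
  Matrix.of
  ![![w, 0, 0, 0, 0, a 0, a 1, a 2],
    ![0, w, 0, 0, a 0, 0, 0, 0],
    ![0, 0, w, 0, a 1, 0, 0, 0],
    ![0, 0, 0, w, a 2, 0, 0, 0],
    ![0, b 0, b 1, b 2, g, 0, 0, 0],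
    ![b 0, 0, 0, 0, 0, g, 0, 0],
    ![b 1, 0, 0, 0, 0, 0, g, 0],
    ![b 2, 0, 0, 0, 0, 0, 0, g]]

/-- The boundary matrix `P_N`. -/
def PNmat (n : R3) : Matrix (Fin 8) (Fin 8) ℂ :=
  let ν := toC3 n
  let c : ℂ := -Complex.I
  Matrix.of
  ![![0, 0, 0, 0, 0, c * ν 0, c * ν 1, c * ν 2],
    ![0, 0, 0, 0, c * ν 0, 0, c * ν 2, -(c * ν 1)],
    ![0, 0, 0, 0, c * ν 1, -(c * ν 2), 0, c * ν 0],
    ![0, 0, 0, 0, c * ν 2, c * ν 1, -(c * ν 0), 0],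
    ![0, c * ν 0, c * ν 1, c * ν 2, 0, 0, 0, 0],
    ![c * ν 0, 0, -(c * ν 2), c * ν 1, 0, 0, 0, 0],
    ![c * ν 1, c * ν 2, 0, -(c * ν 0), 0, 0, 0, 0],
    ![c * ν 2, -(c * ν 1), c * ν 0, 0, 0, 0, 0, 0]]

/-- The operator `Q = WP − PWᵗ − WWᵗ` applied to a field. -/
def Qapp (Wf : R3 → Matrix (Fin 8) (Fin 8) ℂ) (Z : R3 → C8) (x : R3) : C8 :=
  (Wf x).mulVec (Pop Z x) - Pop (fun y => ((Wf y).transpose).mulVec (Z y)) x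
    - (Wf x).mulVec (((Wf x).transpose).mulVec (Z x))

/-- The operator `Q̂ = W*P − PW̄ − W*W̄` applied to a field. -/
def QhatApp (Wf : R3 → Matrix (Fin 8) (Fin 8) ℂ) (Z : R3 → C8) (x : R3) : C8 :=
  ((Wf x).conjTranspose).mulVec (Pop Z x)
    - Pop (fun y => ((Wf y).map (starRingEnd ℂ)).mulVec (Z y)) x
    - ((Wf x).conjTranspose).mulVec (((Wf x).map (starRingEnd ℂ)).mulVec (Z x))

/-- The operator `Q̃ = W(−κ̄,ᾱ,β)P − PWᵗ(−κ̄,ᾱ,β) − W(−κ̄,ᾱ,β)Wᵗ(−κ̄,ᾱ,β)` applied. -/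
def QtildeApp (ω : ℝ) (μ : R3 → ℝ) (γ : R3 → ℂ) : (R3 → C8) → R3 → C8 :=
  Qapp (WmatTil ω μ γ)

def sqrtμC (μ : R3 → ℝ) (x : R3) : ℂ := (Real.sqrt (μ x) : ℂ)
def sqrtγC (γ : R3 → ℂ) (x : R3) : ℂ := (γ x) ^ ((1 : ℂ)/2)

/-- The rescaled field `Y = (0, μ^{1/2}Hᵗ | 0, γ^{1/2}Eᵗ)ᵗ`. -/
def YofEH (μ : R3 → ℝ) (γ : R3 → ℂ) (E H : R3 → C3) (x : R3) : C8 :=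
  asm 0 (fun i => sqrtμC μ x * H x i) 0 (fun i => sqrtγC γ x * E x i)

/-- The time-harmonic Maxwell equations on Ω. -/
def Maxwell (ω : ℝ) (μ : R3 → ℝ) (γ : R3 → ℂ) (E H : R3 → C3) (Ω : Set R3) : Prop :=
  ∀ x ∈ Ω, (∀ i, curl H x i + Complex.I * (ω : ℂ) * γ x * E x i = 0) ∧
           (∀ i, curl E x i - Complex.I * (ω : ℂ) * (μ x : ℂ) * H x i = 0)

/-- Membership in `H(Ω;curl)` (classical-derivative rendering). -/
def MemHcurl (u : R3 → C3) (Ω : Set R3) : Prop :=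
  (∀ x ∈ Ω, DifferentiableAt ℝ u x) ∧ MemLp u 2 (volume.restrict Ω) ∧
    MemLp (fun x => curl u x) 2 (volume.restrict Ω)

/-- Membership in `H¹(Ω;ℂ⁸)`. -/
def MemH1C8 (U : R3 → C8) (Ω : Set R3) : Prop :=
  (∀ x ∈ Ω, DifferentiableAt ℝ U x) ∧ MemLp U 2 (volume.restrict Ω) ∧
    MemLp (fun x => fderiv ℝ U x) 2 (volume.restrict Ω)

/-- Membership in `H¹(Ω;ℂ)`. -/
def MemH1C (f : R3 → ℂ) (Ω : Set R3) : Prop :=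
  (∀ x ∈ Ω, DifferentiableAt ℝ f x) ∧ MemLp f 2 (volume.restrict Ω) ∧
    MemLp (fun x => fderiv ℝ f x) 2 (volume.restrict Ω)

/-- Membership in `H²(Ω;ℂ⁸)`. -/
def MemH2C8 (U : R3 → C8) (Ω : Set R3) : Prop :=
  ContDiffOn ℝ 2 U Ω ∧ MemLp U 2 (volume.restrict Ω) ∧
    MemLp (fun x => fderiv ℝ U x) 2 (volume.restrict Ω) ∧
    MemLp (fun x => fderiv ℝ (fderiv ℝ U) x) 2 (volume.restrict Ω)

/-- Admissible pair of coefficients (Definition 1.4):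
`μ, γ ∈ C^{1,1} ∩ W^{2,∞}`, `Re γ ≥ M⁻¹`, `μ ≥ M⁻¹`, with `W^{2,∞}`-size controlled by `M`. -/
structure Admissible (Ω : Set R3) (M : ℝ) (μ : R3 → ℝ) (γ : R3 → ℂ) : Prop where
  hM : 0 < M
  regμ : ContDiffOn ℝ 1 μ (closure Ω)
  regγ : ContDiffOn ℝ 1 γ (closure Ω)
  lipdμ : LipschitzOnWith (Real.toNNReal M) (fderiv ℝ μ) (closure Ω)
  lipdγ : LipschitzOnWith (Real.toNNReal M) (fderiv ℝ γ) (closure Ω)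
  lowγ : ∀ x ∈ Ω, M⁻¹ ≤ (γ x).re
  lowμ : ∀ x ∈ Ω, M⁻¹ ≤ μ x
  bnd : ∀ x ∈ Ω, ‖γ x‖ + ‖fderiv ℝ γ x‖ + |μ x| + ‖fderiv ℝ μ x‖ ≤ M

/-- Definition 1.1: Ω is a nonempty bounded domain and Γ is a proper nonempty
relatively open subset of ∂Ω (the accessible part of the boundary). -/
structure GoodDomain (Ω Γ : Set R3) : Prop where
  open_Ω : IsOpen Ω
  nonempty_Ω : Ω.Nonempty
  bounded_Ω : Bornology.IsBounded Ω
  conn_Ω : IsConnected Ω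
  Γ_sub : Γ ⊆ frontier Ω
  Γ_ne : Γ.Nonempty
  Γ_rel_open : ∃ V : Set R3, IsOpen V ∧ Γ = frontier Ω ∩ V
  Γ_proper : Γ ≠ frontier Ω

/-- The inaccessible part of the boundary. -/
def Γc (Ω Γ : Set R3) : Set R3 := frontier Ω \ closure Γ

/-- The Cauchy data set restricted to Γ (Definition 1.2). -/
def CauchyData (Ω Γ : Set R3) (N : R3 → R3) (ω : ℝ) (μ : R3 → ℝ) (γ : R3 → ℂ) :
    Set ((R3 → C3) × (R3 → C3)) :=
  { TS | ∃ E H : R3 → C3, MemHcurl E Ω ∧ MemHcurl H Ω ∧ Maxwell ω μ γ E H Ω ∧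
      (∀ x ∈ frontier Ω, crossR (N x) (E x) = TS.1 x) ∧
      (∀ x ∈ Γc Ω Γ, TS.1 x = 0) ∧
      (∀ x ∈ Γ, crossR (N x) (H x) = TS.2 x) }

/-- `e^{iζ·x}`. -/
def cgoExp (ζ : C3) (x : R3) : ℂ := Complex.exp (Complex.I * dot3 ζ (toC3 x))

def q1of (ω : ℝ) (μ : R3 → ℝ) (γ : R3 → ℂ) (x : R3) : ℂ :=
  -(1/2) * lapC (betaOf μ) x - (kappaOf ω μ γ x)^2
    - (1/4) * dot3 (Dof (betaOf μ) x) (Dof (betaOf μ) x)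

def q2of (ω : ℝ) (μ : R3 → ℝ) (γ : R3 → ℂ) (x : R3) : ℂ :=
  -(1/2) * lapC (alphaOf γ) x - (kappaOf ω μ γ x)^2
    - (1/4) * dot3 (Dof (alphaOf γ) x) (Dof (alphaOf γ) x)

/-- The second-order Maxwell operator `L U = ∇×(μ⁻¹∇×U) − ω²γU`. -/
def LopA (ω : ℝ) (μ : R3 → ℝ) (γ : R3 → ℂ) (U : R3 → C3) (x : R3) : C3 := fun i =>
  curl (fun y => fun j => ((μ y)⁻¹ : ℂ) * curl U y j) x i - (ω : ℂ)^2 * γ x * U x i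

/-- `U ∈ H(curl)` with `∇×∇×U ∈ L²`. -/
def MemCurlCurl (U : R3 → C3) (G : Set R3) : Prop :=
  MemHcurl U G ∧ (∀ x ∈ G, DifferentiableAt ℝ (fun y => curl U y) x) ∧
    MemLp (fun x => curl (fun y => curl U y) x) 2 (volume.restrict G)

/-- H(curl) graph norm. -/
def HcurlNorm (v : R3 → C3) (Ω : Set R3) : ℝ :=
  Real.sqrt ((∫ x in Ω, (norm3 (v x))^2) + ∫ x in Ω, (norm3 (curl v x))^2)

def H1Norm (f : R3 → ℂ) (Ω : Set R3) : ℝ :=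
  Real.sqrt ((∫ x in Ω, ‖f x‖^2) + ∫ x in Ω, ‖fderiv ℝ f x‖^2)

/-- The `TH(Γ)` norm: infimum of the `H(curl)` graph norms over all fields whose
tangential trace agrees with `u` on `Γ`. -/
def THGammaNorm (Ω Γ : Set R3) (N : R3 → R3) (u : R3 → C3) : ℝ :=
  sInf { r | ∃ v : R3 → C3, MemHcurl v Ω ∧ (∀ x ∈ Γ, crossR (N x) (v x) = u x) ∧
    r = HcurlNorm v Ω }

/-- The `TH₀(Γ)` (= `TH(∂Ω)`) norm. -/
def TH0Norm (Ω : Set R3) (N : R3 → R3) (u : R3 → C3) : ℝ :=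
  sInf { r | ∃ v : R3 → C3, MemHcurl v Ω ∧ (∀ x ∈ frontier Ω, crossR (N x) (v x) = u x) ∧
    r = HcurlNorm v Ω }

/-- The `H^{1/2}(Γ)` norm (via the trace of `H¹(Ω)`). -/
def H12GammaNorm (Ω Γ : Set R3) (f : R3 → ℂ) : ℝ :=
  sInf { r | ∃ v : R3 → ℂ, MemH1C v Ω ∧ (∀ x ∈ Γ, v x = f x) ∧ r = H1Norm v Ω }

/-- The `H^{1/2}₀(Γ)` (= `H^{1/2}(∂Ω)`) norm. -/
def H120Norm (Ω : Set R3) (f : R3 → ℂ) : ℝ :=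
  sInf { r | ∃ v : R3 → ℂ, MemH1C v Ω ∧ (∀ x ∈ frontier Ω, v x = f x) ∧ r = H1Norm v Ω }

/-- The `C^{0,1}` norm on a set. -/
def C01Norm (s : Set R3) (f : R3 → ℂ) : ℝ :=
  sInf { r | 0 ≤ r ∧ (∀ x ∈ s, ‖f x‖ ≤ r) ∧ LipschitzOnWith (Real.toNNReal r) f s }

/-!
The operator `P` is `∑ⱼ P_N(eⱼ) ∂ⱼ`: its coefficient in direction `n` is the boundary matrix
`P_N(n)`. These coefficients satisfy the Clifford relations
`P_N(n) P_N(n') + P_N(n') P_N(n) = -2 ⟨n, n'⟩`, so by the symmetry of second derivatives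
`P² = -Δ I₈`. Every matrix of the shape `W(κ, α, β)` intertwines the coefficients,
`W P_N(n) = P_N(n) Wᵗ`, and so does `W*`, with `W̄` in place of `Wᵗ`. Hence in
`W (P U) - P (M U)`, with `M = Wᵗ` or `M = W̄`, the Leibniz rule makes the first-order terms
cancel, leaving the multiplication operator `-∑ⱼ P_N(eⱼ) ∂ⱼM`. Expanding
`(P + W)(P - M) = P² + (W P - P M) - W M` then gives the factorizations.
-/

open scoped Matrix

section PartialDerivatives

variable {f g : R3 → ℂ} {x : R3}

theorem pd_sub (hf : DifferentiableAt ℝ f x) (hg : DifferentiableAt ℝ g x) (j : Fin 3) :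
    pd j (fun y => f y - g y) x = pd j f x - pd j g x := by
  simp [pd, fderiv_fun_sub hf hg]

theorem pd_mul (hf : DifferentiableAt ℝ f x) (hg : DifferentiableAt ℝ g x) (j : Fin 3) :
    pd j (fun y => f y * g y) x = pd j f x * g x + f x * pd j g x := by
  simp only [pd, fderiv_fun_mul hf hg, add_apply, smul_apply, smul_eq_mul]
  ring

theorem pd_sum {ι : Type*} (s : Finset ι) {F : ι → R3 → ℂ}
    (hF : ∀ i ∈ s, DifferentiableAt ℝ (F i) x) (j : Fin 3) :
    pd j (fun y => ∑ i ∈ s, F i y) x = ∑ i ∈ s, pd j (F i) x := by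
  simp [pd, fderiv_fun_sum hF]

theorem pd_const (c : ℂ) (j : Fin 3) (x : R3) : pd j (fun _ => c) x = 0 := by
  simp [pd]

theorem differentiableAt_pd (hf : ContDiffAt ℝ 2 f x) (j : Fin 3) :
    DifferentiableAt ℝ (pd j f) x :=
  ((hf.fderiv_right (m := 1) (by norm_num)).differentiableAt one_ne_zero).clm_apply
    (differentiableAt_const _)

theorem pd_comm (hf : ContDiffAt ℝ 2 f x) (j k : Fin 3) :
    pd j (pd k f) x = pd k (pd j f) x := by
  have hd : DifferentiableAt ℝ (fderiv ℝ f) x :=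
    (hf.fderiv_right (m := 1) (by norm_num)).differentiableAt one_ne_zero
  have hsecond : ∀ v w : R3,
      fderiv ℝ (fun y => fderiv ℝ f y w) x v = fderiv ℝ (fderiv ℝ f) x v w := fun v w => by
    simp [fderiv_clm_apply hd (differentiableAt_const w)]
  change fderiv ℝ (fun y => fderiv ℝ f y _) x _ = fderiv ℝ (fun y => fderiv ℝ f y _) x _
  rw [hsecond, hsecond]
  exact hf.isSymmSndFDerivAt (by simp [minSmoothness_of_isRCLikeNormedField]) _ _

end PartialDerivatives

section VectorPartialDerivatives

variable {n : Type*}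

def pdVec (j : Fin 3) (V : R3 → n → ℂ) (x : R3) : n → ℂ :=
  fun m => pd j (fun y => V y m) x

def pdMatrix (j : Fin 3) (M : R3 → Matrix n n ℂ) (x : R3) : Matrix n n ℂ :=
  Matrix.of fun m l => pd j (fun y => M y m l) x

variable {M : R3 → Matrix n n ℂ} {U V : R3 → n → ℂ} {x : R3}

theorem differentiableAt_mulVec_apply [Fintype n]
    (hM : ∀ m l, DifferentiableAt ℝ (fun y => M y m l) x)
    (hU : ∀ l, DifferentiableAt ℝ (fun y => U y l) x) (m : n) :
    DifferentiableAt ℝ (fun y => (M y *ᵥ U y) m) x :=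
  DifferentiableAt.fun_sum fun l _ => (hM m l).mul (hU l)

theorem pdVec_mulVec [Fintype n] (hM : ∀ m l, DifferentiableAt ℝ (fun y => M y m l) x)
    (hU : ∀ l, DifferentiableAt ℝ (fun y => U y l) x) (j : Fin 3) :
    pdVec j (fun y => M y *ᵥ U y) x = pdMatrix j M x *ᵥ U x + M x *ᵥ pdVec j U x := by
  ext m
  refine (pd_sum Finset.univ (F := fun l y => M y m l * U y l)
    (fun l _ => (hM m l).mul (hU l)) j).trans ?_
  simp only [pd_mul (hM m _) (hU _), Finset.sum_add_distrib]
  rfl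

theorem pdMatrix_const (C : Matrix n n ℂ) (j : Fin 3) (x : R3) :
    pdMatrix j (fun _ => C) x = 0 := by
  ext m l
  simp [pdMatrix, pd_const]

theorem pdVec_const_mulVec [Fintype n] (C : Matrix n n ℂ)
    (hV : ∀ l, DifferentiableAt ℝ (fun y => V y l) x) (j : Fin 3) :
    pdVec j (fun y => C *ᵥ V y) x = C *ᵥ pdVec j V x := by
  rw [pdVec_mulVec (M := fun _ => C) (fun _ _ => differentiableAt_const _) hV, pdMatrix_const,
    Matrix.zero_mulVec, zero_add]

theorem pdVec_sub (hU : ∀ m, DifferentiableAt ℝ (fun y => U y m) x)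
    (hV : ∀ m, DifferentiableAt ℝ (fun y => V y m) x) (j : Fin 3) :
    pdVec j (fun y => U y - V y) x = pdVec j U x - pdVec j V x := by
  ext m
  exact pd_sub (hU m) (hV m) j

theorem pdVec_sum {ι : Type*} (s : Finset ι) {F : ι → R3 → n → ℂ}
    (hF : ∀ i ∈ s, ∀ m, DifferentiableAt ℝ (fun y => F i y m) x) (j : Fin 3) :
    pdVec j (fun y => ∑ i ∈ s, F i y) x = ∑ i ∈ s, pdVec j (F i) x := by
  ext m
  simp only [pdVec, Finset.sum_apply]
  exact pd_sum s (fun i hi => hF i hi m) j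

end VectorPartialDerivatives

theorem sum_sum_mul_mulVec_of_anticomm {ι n : Type*} [Fintype ι] [DecidableEq ι] [Fintype n]
    [DecidableEq n] (P : ι → Matrix n n ℂ) (H : ι → ι → n → ℂ)
    (hP : ∀ j k, P j * P k + P k * P j = (-2 * if j = k then 1 else 0 : ℂ) • 1)
    (hH : ∀ j k, H j k = H k j) :
    ∑ j, ∑ k, (P j * P k) *ᵥ H j k = -∑ j, H j j := by
  have hswap : ∑ j, ∑ k, (P j * P k) *ᵥ H j k = ∑ j, ∑ k, (P k * P j) *ᵥ H j k := by
    rw [Finset.sum_comm]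
    simp only [hH]
  have hdouble : ∑ j, ∑ k, (P j * P k) *ᵥ H j k + ∑ j, ∑ k, (P j * P k) *ᵥ H j k
      = -(2 : ℂ) • ∑ j, H j j := by
    nth_rw 2 [hswap]
    simp only [← Finset.sum_add_distrib, ← Matrix.add_mulVec, hP, Matrix.smul_mulVec,
      Matrix.one_mulVec]
    simp [ite_smul, Finset.smul_sum]
  have h2 : (2 : ℂ) • ∑ j, ∑ k, (P j * P k) *ᵥ H j k = (2 : ℂ) • -∑ j, H j j := by
    rw [two_smul, hdouble, smul_neg, neg_smul]
  exact smul_right_injective _ two_ne_zero h2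

section Symbols

theorem PNmat_mul_add_mul (n n' : R3) :
    PNmat n * PNmat n' + PNmat n' * PNmat n = (-(2 * (inner ℝ n n' : ℂ))) • 1 := by
  ext i j
  simp only [PiLp.inner_apply, Fin.sum_univ_three, RCLike.inner_apply, conj_trivial]
  fin_cases i <;> fin_cases j <;>
  · simp only [PNmat, Matrix.add_apply, Matrix.mul_apply, Fin.sum_univ_eight, Matrix.of_apply,
      Matrix.cons_val, Matrix.smul_apply, Matrix.one_apply, toC3, Fin.reduceEq, if_true,
      if_false, Fin.zero_eta, Fin.mk_one, Fin.isValue, Fin.reduceFinMk, smul_eq_mul,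
      Complex.ofReal_add, Complex.ofReal_mul]
    ring_nf <;> (try simp only [Complex.I_sq]) <;> ring_nf

theorem PNmat_single_mul_add_mul (j k : Fin 3) :
    PNmat (EuclideanSpace.single j 1) * PNmat (EuclideanSpace.single k 1)
      + PNmat (EuclideanSpace.single k 1) * PNmat (EuclideanSpace.single j 1)
      = (-2 * if j = k then 1 else 0 : ℂ) • 1 := by
  rw [PNmat_mul_add_mul, EuclideanSpace.inner_single_left]
  split_ifs with h <;> simp [PiLp.single_apply, h]

theorem PNmat_conjTranspose (n : R3) : (PNmat n)ᴴ = -PNmat n := by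
  ext i j
  fin_cases i <;> fin_cases j <;> simp [PNmat, toC3]

theorem Wmat_transpose (κ α β : R3 → ℂ) (x : R3) : (Wmat κ α β x)ᵀ = Wmat κ β α x := by
  ext i j
  fin_cases i <;> fin_cases j <;> simp [Wmat]

theorem Wmat_mul_PNmat (κ α β : R3 → ℂ) (x n : R3) :
    Wmat κ α β x * PNmat n = PNmat n * (Wmat κ α β x)ᵀ := by
  rw [Wmat_transpose]
  ext i j
  fin_cases i <;> fin_cases j <;>
  · simp only [PNmat, Wmat, Matrix.mul_apply, Fin.sum_univ_eight, Matrix.of_apply,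
      Matrix.cons_val, Fin.isValue, Fin.zero_eta, Fin.mk_one, Fin.reduceFinMk]
    ring

theorem Wmat_conjTranspose_mul_PNmat (κ α β : R3 → ℂ) (x n : R3) :
    (Wmat κ α β x)ᴴ * PNmat n = PNmat n * (Wmat κ α β x).map (starRingEnd ℂ) := by
  have h := congrArg Matrix.conjTranspose (Wmat_mul_PNmat κ β α x n)
  rw [← Wmat_transpose κ α β x, Matrix.transpose_transpose, Matrix.conjTranspose_mul,
    Matrix.conjTranspose_mul, PNmat_conjTranspose, Matrix.transpose_conjTranspose] at h
  simpa using h.symm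

end Symbols

section FirstOrderOperator

variable {U V : R3 → C8} {x : R3}

theorem Pop_eq_sum (V : R3 → C8) (x : R3) :
    Pop V x = ∑ j, PNmat (EuclideanSpace.single j 1) *ᵥ pdVec j V x := by
  ext m
  fin_cases m <;>
  · simp only [Pop, asm, divg, curl, pt1, pt2, vec1, vec2, PNmat, toC3, pdVec,
      Fin.sum_univ_three, Finset.sum_apply, Matrix.mulVec, dotProduct, Fin.sum_univ_eight,
      Matrix.of_apply, Matrix.cons_val, Fin.isValue, Fin.zero_eta, Fin.mk_one, Fin.reduceFinMk,
      Fin.reduceAdd, PiLp.single_apply, Fin.val_zero, Fin.val_one, Fin.val_two, Nat.reduceAdd,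
      Fin.reduceEq, if_true, if_false]
    push_cast
    ring

theorem Pop_sub (hU : DifferentiableAt ℝ U x) (hV : DifferentiableAt ℝ V x) :
    Pop (fun y => U y - V y) x = Pop U x - Pop V x := by
  simp only [Pop_eq_sum, ← Finset.sum_sub_distrib, ← Matrix.mulVec_sub,
    pdVec_sub (differentiableAt_pi.1 hU) (differentiableAt_pi.1 hV)]

theorem differentiableAt_Pop_apply (hU : ContDiffAt ℝ 2 U x) (m : Fin 8) :
    DifferentiableAt ℝ (fun y => Pop U y m) x := by
  have hsum : (fun y => Pop U y m)
      = fun y => ∑ j, (PNmat (EuclideanSpace.single j 1) *ᵥ pdVec j U y) m :=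
    funext fun y => by rw [Pop_eq_sum, Finset.sum_apply]
  rw [hsum]
  exact DifferentiableAt.fun_sum fun j _ => differentiableAt_mulVec_apply
    (M := fun _ => PNmat (EuclideanSpace.single j 1)) (fun _ _ => differentiableAt_const _)
    (fun l => differentiableAt_pd (contDiffAt_pi.1 hU l) j) m

theorem lap8_eq_sum (U : R3 → C8) (x : R3) : lap8 U x = ∑ j, pdVec j (pdVec j U) x := by
  ext m
  simp only [lap8, lapC, Finset.sum_apply]
  rfl

theorem Pop_Pop (hU : ContDiffAt ℝ 2 U x) : Pop (Pop U) x = -lap8 U x := by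
  have hU' : ∀ l, ContDiffAt ℝ 2 (fun y => U y l) x := contDiffAt_pi.1 hU
  have hpd : ∀ k l, DifferentiableAt ℝ (fun y => pdVec k U y l) x :=
    fun k l => differentiableAt_pd (hU' l) k
  have hsymm : ∀ j k, pdVec j (pdVec k U) x = pdVec k (pdVec j U) x :=
    fun j k => funext fun l => pd_comm (hU' l) j k
  calc Pop (Pop U) x
      = ∑ j, PNmat (EuclideanSpace.single j 1) *ᵥ
          pdVec j (fun y => ∑ k, PNmat (EuclideanSpace.single k 1) *ᵥ pdVec k U y) x := by
        rw [Pop_eq_sum, funext (Pop_eq_sum U)]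
    _ = ∑ j, ∑ k, (PNmat (EuclideanSpace.single j 1) * PNmat (EuclideanSpace.single k 1)) *ᵥ
          pdVec j (pdVec k U) x := by
        refine Finset.sum_congr rfl fun j _ => ?_
        rw [pdVec_sum (F := fun k y => PNmat (EuclideanSpace.single k 1) *ᵥ pdVec k U y) _
          fun k _ => differentiableAt_mulVec_apply (fun _ _ => differentiableAt_const _) (hpd k),
          Matrix.mulVec_sum]
        simp only [pdVec_const_mulVec _ (hpd _), Matrix.mulVec_mulVec]
    _ = -lap8 U x := by
        rw [sum_sum_mul_mulVec_of_anticomm _ _ PNmat_single_mul_add_mul hsymm, lap8_eq_sum]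

end FirstOrderOperator

def commutatorMatrix (M : R3 → Matrix (Fin 8) (Fin 8) ℂ) (x : R3) : Matrix (Fin 8) (Fin 8) ℂ :=
  -∑ j, PNmat (EuclideanSpace.single j 1) * pdMatrix j M x

section Commutator

variable {W M : R3 → Matrix (Fin 8) (Fin 8) ℂ} {U : R3 → C8} {x : R3}

theorem mulVec_Pop_sub_Pop_mulVec
    (hWM : ∀ j, W x * PNmat (EuclideanSpace.single j 1) = PNmat (EuclideanSpace.single j 1) * M x)
    (hM : ∀ m l, DifferentiableAt ℝ (fun y => M y m l) x) (hU : DifferentiableAt ℝ U x) :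
    W x *ᵥ Pop U x - Pop (fun y => M y *ᵥ U y) x = commutatorMatrix M x *ᵥ U x := by
  simp only [Pop_eq_sum, pdVec_mulVec hM (differentiableAt_pi.1 hU), Matrix.mulVec_add,
    Matrix.mulVec_sum, Matrix.mulVec_mulVec, hWM, Finset.sum_add_distrib, commutatorMatrix,
    Matrix.neg_mulVec, Matrix.sum_mulVec]
  abel

theorem Pop_sub_mulVec_factorization
    (hWM : ∀ j, W x * PNmat (EuclideanSpace.single j 1) = PNmat (EuclideanSpace.single j 1) * M x)
    (hM : ∀ m l, DifferentiableAt ℝ (fun y => M y m l) x) (hU : ContDiffAt ℝ 2 U x) :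
    Pop (fun y => Pop U y - M y *ᵥ U y) x + W x *ᵥ (Pop U x - M x *ᵥ U x)
      = -lap8 U x + (commutatorMatrix M x *ᵥ U x - W x *ᵥ (M x *ᵥ U x)) := by
  have hU₁ : DifferentiableAt ℝ U x := hU.differentiableAt two_ne_zero
  rw [Pop_sub (differentiableAt_pi.2 (differentiableAt_Pop_apply hU))
    (differentiableAt_pi.2 (differentiableAt_mulVec_apply hM (differentiableAt_pi.1 hU₁))),
    Pop_Pop hU, Matrix.mulVec_sub, ← mulVec_Pop_sub_Pop_mulVec hWM hM hU₁]
  abel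

end Commutator

section Coefficients

variable {x : R3}

theorem differentiableAt_Dof_apply {α : R3 → ℂ} (hα : ContDiffAt ℝ 2 α x) (i : Fin 3) :
    DifferentiableAt ℝ (fun y => Dof α y i) x :=
  (differentiableAt_pd hα i).const_mul _

theorem differentiableAt_Wmat_apply {κ α β : R3 → ℂ} (hκ : DifferentiableAt ℝ κ x)
    (hα : ContDiffAt ℝ 2 α x) (hβ : ContDiffAt ℝ 2 β x) (m l : Fin 8) :
    DifferentiableAt ℝ (fun y => Wmat κ α β y m l) x := by
  have ha := differentiableAt_Dof_apply hα
  have hb := differentiableAt_Dof_apply hβ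
  fin_cases m <;> fin_cases l <;>
    simp only [Wmat, Matrix.of_apply, Matrix.cons_val, Fin.isValue, Fin.zero_eta, Fin.mk_one,
      Fin.reduceFinMk] <;>
    fun_prop

theorem contDiffAt_alphaOf {n : WithTop ℕ∞} {γ : R3 → ℂ} (hγ : ContDiffAt ℝ n γ x)
    (hx : γ x ∈ Complex.slitPlane) : ContDiffAt ℝ n (alphaOf γ) x :=
  ((Complex.contDiffAt_log hx).restrict_scalars ℝ).comp x hγ

theorem contDiffAt_betaOf {n : WithTop ℕ∞} {μ : R3 → ℝ} (hμ : ContDiffAt ℝ n μ x)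
    (hx : μ x ≠ 0) : ContDiffAt ℝ n (betaOf μ) x :=
  Complex.ofRealCLM.contDiff.contDiffAt.comp x ((Real.contDiffAt_log.2 hx).comp x hμ)

theorem differentiableAt_kappaOf (ω : ℝ) {μ : R3 → ℝ} {γ : R3 → ℂ}
    (hμ : DifferentiableAt ℝ μ x) (hμx : μ x ≠ 0)
    (hγ : DifferentiableAt ℝ γ x) (hγx : γ x ∈ Complex.slitPlane) :
    DifferentiableAt ℝ (kappaOf ω μ γ) x := by
  have hsqrt : DifferentiableAt ℝ (fun y => (Real.sqrt (μ y) : ℂ)) x :=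
    Complex.ofRealCLM.differentiableAt.comp x (hμ.sqrt hμx)
  have hpow : DifferentiableAt ℝ (fun y => γ y ^ ((1 : ℂ) / 2)) x :=
    ((differentiableAt_id.cpow_const hγx).restrictScalars ℝ).comp x hγ
  exact (hsqrt.const_mul _).mul hpow

theorem Admissible.coefficients_regular {Ω : Set R3} {M : ℝ} {μ : R3 → ℝ} {γ : R3 → ℂ}
    (hadm : Admissible Ω M μ γ) (hΩ : IsOpen Ω) (hμ2 : ContDiffOn ℝ 2 μ Ω)
    (hγ2 : ContDiffOn ℝ 2 γ Ω) (ω : ℝ) (hx : x ∈ Ω) :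
    DifferentiableAt ℝ (kappaOf ω μ γ) x ∧ ContDiffAt ℝ 2 (alphaOf γ) x ∧
      ContDiffAt ℝ 2 (betaOf μ) x := by
  have hμ : ContDiffAt ℝ 2 μ x := hμ2.contDiffAt (hΩ.mem_nhds hx)
  have hγ : ContDiffAt ℝ 2 γ x := hγ2.contDiffAt (hΩ.mem_nhds hx)
  have hμx : μ x ≠ 0 := (lt_of_lt_of_le (inv_pos.2 hadm.hM) (hadm.lowμ x hx)).ne'
  have hγx : γ x ∈ Complex.slitPlane :=
    Or.inl (lt_of_lt_of_le (inv_pos.2 hadm.hM) (hadm.lowγ x hx))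
  exact ⟨differentiableAt_kappaOf ω (hμ.differentiableAt two_ne_zero) hμx
      (hγ.differentiableAt two_ne_zero) hγx,
    contDiffAt_alphaOf hγ hγx, contDiffAt_betaOf hμ hμx⟩

end Coefficients

theorem zeroth_order_and_factorizations_general
    (Ω : Set R3) (hΩ : IsOpen Ω) (M ω : ℝ)
    (μ : R3 → ℝ) (γ : R3 → ℂ) (hadm : Admissible Ω M μ γ)
    (hμ2 : ContDiffOn ℝ 2 μ Ω) (hγ2 : ContDiffOn ℝ 2 γ Ω) :
    ∃ A Ahat Atil : R3 → Matrix (Fin 8) (Fin 8) ℂ,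
      (∀ U : R3 → C8, ContDiff ℝ 2 U → ∀ x ∈ Ω,
        ((WmatC ω μ γ x).mulVec (Pop U x)
            - Pop (fun y => ((WmatC ω μ γ y).transpose).mulVec (U y)) x
          = (A x).mulVec (U x)) ∧
        (((WmatC ω μ γ x).conjTranspose).mulVec (Pop U x)
            - Pop (fun y => ((WmatC ω μ γ y).map (starRingEnd ℂ)).mulVec (U y)) x
          = (Ahat x).mulVec (U x)) ∧
        ((WmatTil ω μ γ x).mulVec (Pop U x)
            - Pop (fun y => ((WmatTil ω μ γ y).transpose).mulVec (U y)) x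
          = (Atil x).mulVec (U x))) ∧
      (∀ U : R3 → C8, ContDiff ℝ 2 U → ∀ x ∈ Ω,
        (Pop (fun y => Pop U y - ((WmatC ω μ γ y).transpose).mulVec (U y)) x
            + (WmatC ω μ γ x).mulVec (Pop U x - ((WmatC ω μ γ x).transpose).mulVec (U x))
          = -lap8 U x + ((A x).mulVec (U x)
              - (WmatC ω μ γ x).mulVec (((WmatC ω μ γ x).transpose).mulVec (U x)))) ∧
        (Pop (fun y => Pop U y - ((WmatC ω μ γ y).map (starRingEnd ℂ)).mulVec (U y)) x
            + ((WmatC ω μ γ x).conjTranspose).mulVec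
                (Pop U x - ((WmatC ω μ γ x).map (starRingEnd ℂ)).mulVec (U x))
          = -lap8 U x + ((Ahat x).mulVec (U x)
              - ((WmatC ω μ γ x).conjTranspose).mulVec
                  (((WmatC ω μ γ x).map (starRingEnd ℂ)).mulVec (U x)))) ∧
        (Pop (fun y => Pop U y - ((WmatTil ω μ γ y).transpose).mulVec (U y)) x
            + (WmatTil ω μ γ x).mulVec (Pop U x - ((WmatTil ω μ γ x).transpose).mulVec (U x))
          = -lap8 U x + ((Atil x).mulVec (U x)
              - (WmatTil ω μ γ x).mulVec (((WmatTil ω μ γ x).transpose).mulVec (U x))))) := by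
  have hW : ∀ x ∈ Ω, ∀ m l, DifferentiableAt ℝ (fun y => WmatC ω μ γ y m l) x := fun x hx =>
    let ⟨hκ, hα, hβ⟩ := hadm.coefficients_regular hΩ hμ2 hγ2 ω hx
    differentiableAt_Wmat_apply hκ hα hβ
  have hWtil : ∀ x ∈ Ω, ∀ m l, DifferentiableAt ℝ (fun y => WmatTil ω μ γ y m l) x :=
    fun x hx =>
    let ⟨hκ, hα, hβ⟩ := hadm.coefficients_regular hΩ hμ2 hγ2 ω hx
    differentiableAt_Wmat_apply (Complex.conjCLE.differentiableAt.comp x hκ).neg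
      (Complex.conjCLE.contDiff.contDiffAt.comp x hα) hβ
  have hWbar : ∀ x ∈ Ω, ∀ m l,
      DifferentiableAt ℝ (fun y => (WmatC ω μ γ y).map (starRingEnd ℂ) m l) x :=
    fun x hx m l => Complex.conjCLE.differentiableAt.comp x (hW x hx m l)
  refine ⟨commutatorMatrix fun y => (WmatC ω μ γ y)ᵀ,
    commutatorMatrix fun y => (WmatC ω μ γ y).map (starRingEnd ℂ),
    commutatorMatrix fun y => (WmatTil ω μ γ y)ᵀ, fun U hU x hx => ⟨?_, ?_, ?_⟩,
    fun U hU x hx => ⟨?_, ?_, ?_⟩⟩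
  · exact mulVec_Pop_sub_Pop_mulVec (W := WmatC ω μ γ) (fun j => Wmat_mul_PNmat _ _ _ _ _)
      (fun m l => hW x hx l m) (hU.differentiable two_ne_zero x)
  · exact mulVec_Pop_sub_Pop_mulVec (W := fun y => (WmatC ω μ γ y)ᴴ)
      (fun j => Wmat_conjTranspose_mul_PNmat _ _ _ _ _) (hWbar x hx) (hU.differentiable two_ne_zero x)
  · exact mulVec_Pop_sub_Pop_mulVec (W := WmatTil ω μ γ) (fun j => Wmat_mul_PNmat _ _ _ _ _)
      (fun m l => hWtil x hx l m) (hU.differentiable two_ne_zero x)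
  · exact Pop_sub_mulVec_factorization (W := WmatC ω μ γ) (fun j => Wmat_mul_PNmat _ _ _ _ _)
      (fun m l => hW x hx l m) hU.contDiffAt
  · exact Pop_sub_mulVec_factorization (W := fun y => (WmatC ω μ γ y)ᴴ)
      (fun j => Wmat_conjTranspose_mul_PNmat _ _ _ _ _) (hWbar x hx) hU.contDiffAt
  · exact Pop_sub_mulVec_factorization (W := WmatTil ω μ γ) (fun j => Wmat_mul_PNmat _ _ _ _ _)
      (fun m l => hWtil x hx l m) hU.contDiffAt

/-- `WP − PWᵗ`, `W*P − PW̄` and `W(−κ̄,ᾱ,β)P − PWᵗ(−κ̄,ᾱ,β)` are zeroth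
order (multiplication by matrix-valued functions), and the corresponding second-order
factorizations `(P+W)(P−Wᵗ) = −ΔI₈ + Q`, `(P+W*)(P−W̄) = −ΔI₈ + Q̂`,
`(P+W(−κ̄,ᾱ,β))(P−Wᵗ(−κ̄,ᾱ,β)) = −ΔI₈ + Q̃` hold, with no first-order terms. -/
theorem zeroth_order_and_factorizations
    (Ω : Set R3) (hΩ : IsOpen Ω) (M ω : ℝ) (hω : 0 < ω)
    (μ : R3 → ℝ) (γ : R3 → ℂ) (hadm : Admissible Ω M μ γ)
    (hμ2 : ContDiffOn ℝ 2 μ Ω) (hγ2 : ContDiffOn ℝ 2 γ Ω) :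
    ∃ A Ahat Atil : R3 → Matrix (Fin 8) (Fin 8) ℂ,
      (∀ U : R3 → C8, ContDiff ℝ 2 U → ∀ x ∈ Ω,
        ((WmatC ω μ γ x).mulVec (Pop U x)
            - Pop (fun y => ((WmatC ω μ γ y).transpose).mulVec (U y)) x
          = (A x).mulVec (U x)) ∧
        (((WmatC ω μ γ x).conjTranspose).mulVec (Pop U x)
            - Pop (fun y => ((WmatC ω μ γ y).map (starRingEnd ℂ)).mulVec (U y)) x
          = (Ahat x).mulVec (U x)) ∧
        ((WmatTil ω μ γ x).mulVec (Pop U x)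
            - Pop (fun y => ((WmatTil ω μ γ y).transpose).mulVec (U y)) x
          = (Atil x).mulVec (U x))) ∧
      (∀ U : R3 → C8, ContDiff ℝ 2 U → ∀ x ∈ Ω,
        (Pop (fun y => Pop U y - ((WmatC ω μ γ y).transpose).mulVec (U y)) x
            + (WmatC ω μ γ x).mulVec (Pop U x - ((WmatC ω μ γ x).transpose).mulVec (U x))
          = -lap8 U x + ((A x).mulVec (U x)
              - (WmatC ω μ γ x).mulVec (((WmatC ω μ γ x).transpose).mulVec (U x)))) ∧
        (Pop (fun y => Pop U y - ((WmatC ω μ γ y).map (starRingEnd ℂ)).mulVec (U y)) x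
            + ((WmatC ω μ γ x).conjTranspose).mulVec
                (Pop U x - ((WmatC ω μ γ x).map (starRingEnd ℂ)).mulVec (U x))
          = -lap8 U x + ((Ahat x).mulVec (U x)
              - ((WmatC ω μ γ x).conjTranspose).mulVec
                  (((WmatC ω μ γ x).map (starRingEnd ℂ)).mulVec (U x)))) ∧
        (Pop (fun y => Pop U y - ((WmatTil ω μ γ y).transpose).mulVec (U y)) x
            + (WmatTil ω μ γ x).mulVec (Pop U x - ((WmatTil ω μ γ x).transpose).mulVec (U x))
          = -lap8 U x + ((Atil x).mulVec (U x)
              - (WmatTil ω μ γ x).mulVec (((WmatTil ω μ γ x).transpose).mulVec (U x))))) :=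
  zeroth_order_and_factorizations_general Ω hΩ M ω μ γ hadm hμ2 hγ2

end
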